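/- arXiv:1710.08903 — 2 statements merged into one kernel-verified Lean document; each statement's English description precedes it below -/
import Mathlib

section
/- (Lemma 3, case (ii)) In the asymptotic coupon collector setting, if α_1 = 0 and α_2 = 1, then Var(X_n) is asymptotically equivalent to E(a_1(n) − X_n) = a_1(n) − E(X_n), i.e. Var(X_n)/(a_1(n) − E(X_n)) → 1 as n → ∞. -/
open MeasureTheory ProbabilityTheory Filter Finset
open scoped ENNReal NNReal Topology

lemma aux_mem_inf {α ι : Type*} [DecidableEq α] [Fintype α] {s : Finset ι} (hs : s.Nonempty)
    (f : ι → Finset α) (a : α) : a ∈ s.inf f ↔ ∀ i ∈ s, a ∈ f i := by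
  rw [← Finset.inf'_eq_inf hs, Finset.mem_inf' hs]

lemma aux_count {n t b : ℕ} (T : Finset (Fin n)) (hT : T.card = t) (htb : t ≤ b) :
    (Finset.univ.filter fun s : Finset (Fin n) => T ⊆ s ∧ s.card = b).card
      = (n - t).choose (b - t) := by
  have h : (Finset.univ.filter fun s : Finset (Fin n) => T ⊆ s ∧ s.card = b).card
      = (Tᶜ.powersetCard (b - t)).card := by
    apply Finset.card_bij' (fun s _ => s \ T) (fun u _ => u ∪ T)
    · intro s hs
      simp only [Finset.mem_filter, Finset.mem_univ, true_and] at hs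
      simp only [Finset.mem_powersetCard]
      refine ⟨fun x hx => ?_, ?_⟩
      · rw [Finset.mem_compl]
        exact (Finset.mem_sdiff.1 hx).2
      · rw [Finset.card_sdiff_of_subset hs.1, hs.2, hT]
    · intro u hu
      simp only [Finset.mem_powersetCard] at hu
      have hdisj : Disjoint u T := by
        rw [Finset.disjoint_left]
        intro x hx hxT
        exact (Finset.mem_compl.1 (hu.1 hx)) hxT
      simp only [Finset.mem_filter, Finset.mem_univ, true_and]
      refine ⟨Finset.subset_union_right, ?_⟩
      rw [Finset.card_union_of_disjoint hdisj, hu.2, hT]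
      omega
    · intro s hs
      simp only [Finset.mem_filter, Finset.mem_univ, true_and] at hs
      exact Finset.sdiff_union_of_subset hs.1
    · intro u hu
      simp only [Finset.mem_powersetCard] at hu
      have hdisj : Disjoint u T := by
        rw [Finset.disjoint_left]
        intro x hx hxT
        exact (Finset.mem_compl.1 (hu.1 hx)) hxT
      exact Finset.union_sdiff_cancel_right hdisj
  rw [h, Finset.card_powersetCard, Finset.card_compl, Fintype.card_fin, hT]

lemma aux_measure_superset {Ω : Type*} [MeasurableSpace Ω] (P : Measure Ω) {n b : ℕ}
    (S : Ω → Finset (Fin n))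
    (hmeas : ∀ s : Finset (Fin n), MeasurableSet {ω | S ω = s})
    (hunif : ∀ s : Finset (Fin n), P {ω | S ω = s} =
      if s.card = b then ((n.choose b : ℝ≥0∞))⁻¹ else 0)
    (T : Finset (Fin n)) (htb : T.card ≤ b) :
    P {ω | T ⊆ S ω} =
      ((n - T.card).choose (b - T.card) : ℝ≥0∞) * ((n.choose b : ℝ≥0∞))⁻¹ := by
  have hset : {ω | T ⊆ S ω} =
      ⋃ s ∈ (Finset.univ.filter fun s : Finset (Fin n) => T ⊆ s), {ω | S ω = s} := by
    ext ω
    simp only [Set.mem_setOf_eq, Set.mem_iUnion, Finset.mem_filter, Finset.mem_univ, true_and]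
    constructor
    · intro h; exact ⟨S ω, h, rfl⟩
    · rintro ⟨s, hs, h⟩; rw [h]; exact hs
  have hdisj : Set.PairwiseDisjoint
      ↑(Finset.univ.filter fun s : Finset (Fin n) => T ⊆ s)
      (fun s => {ω | S ω = s}) := by
    intro s _ t _ hst
    rw [Function.onFun, Set.disjoint_left]
    intro ω h1 h2
    exact hst (h1.symm.trans h2)
  rw [hset, measure_biUnion_finset hdisj (fun s _ => hmeas s)]
  rw [Finset.sum_congr rfl (fun s _ => hunif s)]
  rw [← Finset.sum_filter, Finset.filter_filter, Finset.sum_const]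
  rw [aux_count T rfl htb, nsmul_eq_mul]

lemma aux_choose_one {n b : ℕ} (hn : 1 ≤ n) (hb : 1 ≤ b) (hbn : b ≤ n) :
    ((n-1).choose (b-1) : ℝ) * ((n.choose b : ℝ))⁻¹ = (b : ℝ) / n := by
  obtain ⟨n', rfl⟩ : ∃ n', n = n' + 1 := ⟨n - 1, by omega⟩
  obtain ⟨b', rfl⟩ : ∃ b', b = b' + 1 := ⟨b - 1, by omega⟩
  have hkey : (n' + 1) * n'.choose b' = (n' + 1).choose (b' + 1) * (b' + 1) :=
    Nat.add_one_mul_choose_eq n' b'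
  have hne : ((n' + 1).choose (b' + 1) : ℝ) ≠ 0 := by
    have := Nat.choose_pos (by omega : b' + 1 ≤ n' + 1)
    positivity
  have hne2 : ((n' + 1 : ℕ) : ℝ) ≠ 0 := by positivity
  have hcast : ((n' + 1 : ℕ) : ℝ) * (n'.choose b' : ℝ)
      = ((n' + 1).choose (b' + 1) : ℝ) * ((b' + 1 : ℕ) : ℝ) := by exact_mod_cast hkey
  push_cast at hcast
  simp only [Nat.add_sub_cancel]
  push_cast
  rw [mul_inv_eq_iff_eq_mul₀ hne, div_mul_eq_mul_div,
    eq_div_iff (by positivity : ((n' : ℝ) + 1) ≠ 0)]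
  linear_combination hcast

lemma aux_choose_two {n b : ℕ} (hn : 2 ≤ n) (hb : 2 ≤ b) (hbn : b ≤ n) :
    ((n-2).choose (b-2) : ℝ) * ((n.choose b : ℝ))⁻¹
      = (b : ℝ) * ((b : ℝ) - 1) / ((n : ℝ) * ((n : ℝ) - 1)) := by
  obtain ⟨n', rfl⟩ : ∃ n', n = n' + 2 := ⟨n - 2, by omega⟩
  obtain ⟨b', rfl⟩ : ∃ b', b = b' + 2 := ⟨b - 2, by omega⟩
  have h1 : (n' + 1) * n'.choose b' = (n' + 1).choose (b' + 1) * (b' + 1) :=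
    Nat.add_one_mul_choose_eq n' b'
  have h2 : (n' + 2) * (n' + 1).choose (b' + 1) = (n' + 2).choose (b' + 2) * (b' + 2) :=
    Nat.add_one_mul_choose_eq (n' + 1) (b' + 1)
  have hkey : (n' + 2) * (n' + 1) * n'.choose b'
      = (n' + 2).choose (b' + 2) * ((b' + 2) * (b' + 1)) := by
    calc (n' + 2) * (n' + 1) * n'.choose b' = (n' + 2) * ((n' + 1) * n'.choose b') := by ring
    _ = (n' + 2) * ((n' + 1).choose (b' + 1) * (b' + 1)) := by rw [h1]
    _ = ((n' + 2) * (n' + 1).choose (b' + 1)) * (b' + 1) := by ring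
    _ = ((n' + 2).choose (b' + 2) * (b' + 2)) * (b' + 1) := by rw [h2]
    _ = (n' + 2).choose (b' + 2) * ((b' + 2) * (b' + 1)) := by ring
  have hne : ((n' + 2).choose (b' + 2) : ℝ) ≠ 0 := by
    have := Nat.choose_pos (by omega : b' + 2 ≤ n' + 2)
    positivity
  have hkeyR : ((n' + 2 : ℕ) : ℝ) * ((n' + 1 : ℕ) : ℝ) * (n'.choose b' : ℝ)
      = ((n' + 2).choose (b' + 2) : ℝ) * (((b' + 2 : ℕ) : ℝ) * ((b' + 1 : ℕ) : ℝ)) := by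
    exact_mod_cast hkey
  push_cast at hkeyR
  simp only [Nat.add_sub_cancel]
  push_cast
  rw [mul_inv_eq_iff_eq_mul₀ hne, div_mul_eq_mul_div,
    eq_div_iff (by nlinarith : ((n' : ℝ) + 2) * ((n' : ℝ) + 2 - 1) ≠ 0)]
  linear_combination hkeyR

example : True := trivial

section
variable {Ω : Type} [MeasurableSpace Ω]

lemma coupon_moments {m n : ℕ} (hm : 0 < m) (hn : 2 ≤ n)
    (P : Measure Ω) [IsProbabilityMeasure P]
    (a : Fin m → ℕ) (S : Fin m → Ω → Finset (Fin n))
    (hmeas : ∀ (i : Fin m) (s : Finset (Fin n)), MeasurableSet {ω | S i ω = s})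
    (hindep : iIndepFun (m := fun _ => ⊤) S P)
    (hunif : ∀ (i : Fin m) (s : Finset (Fin n)),
      P {ω | S i ω = s} = if s.card = a i then ((n.choose (a i) : ℝ≥0∞))⁻¹ else 0)
    (ha2 : ∀ i, 2 ≤ a i) (han : ∀ i, a i ≤ n)
    (X : Ω → ℕ) (hX : ∀ ω, X ω = (Finset.univ.inf fun i => S i ω).card) :
    (∫ ω, (X ω : ℝ) ∂P) = (n : ℝ) * ∏ i, ((a i : ℝ) / n) ∧
    variance (fun ω => (X ω : ℝ)) P
      = (n : ℝ) * ∏ i, ((a i : ℝ) / n)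
        + ((n : ℝ) * ((n : ℝ) - 1))
            * ∏ i, ((a i : ℝ) * ((a i : ℝ) - 1) / ((n : ℝ) * ((n : ℝ) - 1)))
        - ((n : ℝ) * ∏ i, ((a i : ℝ) / n)) ^ 2 := by
  classical
  set r1 : ℝ := ∏ i, ((a i : ℝ) / n) with hr1
  set r2 : ℝ := ∏ i, ((a i : ℝ) * ((a i : ℝ) - 1) / ((n : ℝ) * ((n : ℝ) - 1))) with hr2
  set C : Finset (Fin n) → Set Ω := fun T => ⋂ i, {ω | T ⊆ S i ω} with hC
  -- measurability of superset events
  have hEvent : ∀ (i : Fin m) (T : Finset (Fin n)), MeasurableSet {ω | T ⊆ S i ω} := by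
    intro i T
    have h : {ω | T ⊆ S i ω} = ⋃ (s : Finset (Fin n)) (_ : T ⊆ s), {ω | S i ω = s} := by
      ext ω
      simp only [Set.mem_setOf_eq, Set.mem_iUnion]
      constructor
      · intro h; exact ⟨S i ω, h, rfl⟩
      · rintro ⟨s, hs, h⟩; rw [h]; exact hs
    rw [h]
    exact MeasurableSet.iUnion fun s => MeasurableSet.iUnion fun _ => hmeas i s
  have hCmeas : ∀ T, MeasurableSet (C T) := fun T => MeasurableSet.iInter fun i => hEvent i T
  -- probability of C T
  have hPC : ∀ T : Finset (Fin n), T.card ≤ 2 →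
      P (C T) = ∏ i, (((n - T.card).choose (a i - T.card) : ℝ≥0∞)
        * ((n.choose (a i) : ℝ≥0∞))⁻¹) := by
    intro T hT
    have hcomap : ∀ i : Fin m,
        MeasurableSet[MeasurableSpace.comap (S i) ⊤] {ω | T ⊆ S i ω} :=
      fun i => MeasurableSpace.measurableSet_comap.2 ⟨{s | T ⊆ s}, trivial, rfl⟩
    rw [hC]
    rw [hindep.meas_iInter hcomap]
    exact Finset.prod_congr rfl fun i _ =>
      aux_measure_superset P (S i) (hmeas i) (hunif i) T (le_trans hT (ha2 i))
  -- single-point probability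
  have hone : ∀ j : Fin n, (P (C {j})).toReal = r1 := by
    intro j
    rw [hPC {j} (by simp), ENNReal.toReal_prod, hr1]
    refine Finset.prod_congr rfl fun i _ => ?_
    rw [ENNReal.toReal_mul, ENNReal.toReal_inv, ENNReal.toReal_natCast, ENNReal.toReal_natCast,
      Finset.card_singleton]
    exact aux_choose_one (by omega) (by have := ha2 i; omega) (han i)
  -- pair probability
  have htwo : ∀ j k : Fin n, j ≠ k → (P (C {j, k})).toReal = r2 := by
    intro j k hjk
    have hcard : ({j, k} : Finset (Fin n)).card = 2 := Finset.card_pair hjk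
    rw [hPC {j, k} (le_of_eq hcard), ENNReal.toReal_prod, hr2]
    refine Finset.prod_congr rfl fun i _ => ?_
    rw [ENNReal.toReal_mul, ENNReal.toReal_inv, ENNReal.toReal_natCast, ENNReal.toReal_natCast,
      hcard]
    exact aux_choose_two hn (ha2 i) (han i)
  -- X as a sum of indicators
  have hcard_sum : ∀ u : Finset (Fin n),
      (u.card : ℝ) = ∑ j : Fin n, (if j ∈ u then (1 : ℝ) else 0) := by
    intro u
    rw [Finset.sum_ite_mem, Finset.univ_inter, Finset.sum_const, nsmul_eq_mul, mul_one]
  have hBsum : ∀ ω, (X ω : ℝ)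
      = ∑ j : Fin n, Set.indicator (C {j}) (fun _ => (1 : ℝ)) ω := by
    intro ω
    have hmem : ∀ j : Fin n, ω ∈ C {j} ↔ j ∈ (Finset.univ.inf fun i => S i ω) := by
      intro j
      have hne : (Finset.univ : Finset (Fin m)).Nonempty :=
        ⟨⟨0, hm⟩, Finset.mem_univ _⟩
      rw [aux_mem_inf hne]
      simp [hC, Set.mem_iInter, Finset.singleton_subset_iff]
    rw [hX, hcard_sum]
    refine Finset.sum_congr rfl fun j _ => ?_
    rw [Set.indicator_apply]
    by_cases h : ω ∈ C {j}
    · simp [h, (hmem j).1 h]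
    · have hnot : j ∉ (Finset.univ.inf fun i => S i ω) := fun hj => h ((hmem j).2 hj)
      simp [h, hnot]
  have hXmeasR : Measurable fun ω => (X ω : ℝ) := by
    have h : (fun ω => (X ω : ℝ))
        = fun ω => ∑ j : Fin n, Set.indicator (C {j}) (fun _ => (1 : ℝ)) ω :=
      funext hBsum
    rw [h]
    exact Finset.measurable_sum _ fun j _ => measurable_const.indicator (hCmeas {j})
  -- first moment
  have hInt1 : ∫ ω, (X ω : ℝ) ∂P = (n : ℝ) * r1 := by
    calc ∫ ω, (X ω : ℝ) ∂P
        = ∫ ω, ∑ j : Fin n, Set.indicator (C {j}) (fun _ => (1 : ℝ)) ω ∂P := by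
          exact integral_congr_ae (Eventually.of_forall hBsum)
      _ = ∑ j : Fin n, ∫ ω, Set.indicator (C {j}) (fun _ => (1 : ℝ)) ω ∂P := by
          exact integral_finset_sum _ fun j _ =>
            (integrable_const (1 : ℝ)).indicator (hCmeas {j})
      _ = ∑ j : Fin n, (P (C {j})).toReal := by
          refine Finset.sum_congr rfl fun j _ => ?_
          rw [integral_indicator_const (1 : ℝ) (hCmeas {j}), smul_eq_mul, mul_one]
          rfl
      _ = ∑ j : Fin n, r1 := Finset.sum_congr rfl fun j _ => hone j
      _ = (n : ℝ) * r1 := by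
          rw [Finset.sum_const, Finset.card_univ, Fintype.card_fin, nsmul_eq_mul]
  -- second moment
  have hCC : ∀ j k : Fin n, C {j} ∩ C {k} = C ({j} ∪ {k}) := by
    intro j k
    ext ω
    simp only [hC, Set.mem_inter_iff, Set.mem_iInter, Set.mem_setOf_eq,
      Finset.union_subset_iff, forall_and]
  have hsq : ∀ ω, (X ω : ℝ) ^ 2
      = ∑ j : Fin n, ∑ k : Fin n,
          Set.indicator (C {j} ∩ C {k}) (fun _ => (1 : ℝ)) ω := by
    intro ω
    rw [hBsum ω, sq, Finset.sum_mul_sum]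
    refine Finset.sum_congr rfl fun j _ => Finset.sum_congr rfl fun k _ => ?_
    rw [← Set.inter_indicator_mul]
    simp
  have hInt2 : ∫ ω, (X ω : ℝ) ^ 2 ∂P = (n : ℝ) * (r1 + ((n : ℝ) - 1) * r2) := by
    calc ∫ ω, (X ω : ℝ) ^ 2 ∂P
        = ∫ ω, ∑ j : Fin n, ∑ k : Fin n,
            Set.indicator (C {j} ∩ C {k}) (fun _ => (1 : ℝ)) ω ∂P :=
          integral_congr_ae (Eventually.of_forall hsq)
      _ = ∑ j : Fin n, ∫ ω, ∑ k : Fin n,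
            Set.indicator (C {j} ∩ C {k}) (fun _ => (1 : ℝ)) ω ∂P := by
          exact integral_finset_sum _ fun j _ => integrable_finset_sum _ fun k _ =>
            (integrable_const (1 : ℝ)).indicator ((hCmeas {j}).inter (hCmeas {k}))
      _ = ∑ j : Fin n, ∑ k : Fin n, (P (C {j} ∩ C {k})).toReal := by
          refine Finset.sum_congr rfl fun j _ => ?_
          rw [integral_finset_sum _ fun k _ =>
            (integrable_const (1 : ℝ)).indicator ((hCmeas {j}).inter (hCmeas {k}))]
          refine Finset.sum_congr rfl fun k _ => ?_
          rw [integral_indicator_const (1 : ℝ) ((hCmeas {j}).inter (hCmeas {k})),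
            smul_eq_mul, mul_one]
          rfl
      _ = ∑ j : Fin n, ∑ k : Fin n, (if k = j then r1 else r2) := by
          refine Finset.sum_congr rfl fun j _ => Finset.sum_congr rfl fun k _ => ?_
          by_cases h : k = j
          · subst h
            rw [if_pos rfl, Set.inter_self]
            exact hone k
          · rw [if_neg h, hCC j k]
            have : ({j} ∪ {k} : Finset (Fin n)) = {j, k} := rfl
            rw [this]
            exact htwo j k (Ne.symm h)
      _ = ∑ j : Fin n, (r1 + ((n : ℝ) - 1) * r2) := by
          refine Finset.sum_congr rfl fun j _ => ?_
          have h : ∀ k : Fin n, (if k = j then r1 else r2)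
              = r2 + (if k = j then r1 - r2 else 0) := by
            intro k; by_cases h : k = j <;> simp [h]
          rw [Finset.sum_congr rfl fun k _ => h k, Finset.sum_add_distrib,
            Finset.sum_const, Finset.sum_ite_eq' Finset.univ j fun _ => r1 - r2,
            if_pos (Finset.mem_univ j), Finset.card_univ, Fintype.card_fin, nsmul_eq_mul]
          ring
      _ = (n : ℝ) * (r1 + ((n : ℝ) - 1) * r2) := by
          rw [Finset.sum_const, Finset.card_univ, Fintype.card_fin, nsmul_eq_mul]
  -- conclude
  refine ⟨hInt1, ?_⟩
  have hbound : ∀ᵐ ω ∂P, (X ω : ℝ) ∈ Set.Icc (0 : ℝ) (n : ℝ) := by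
    refine Eventually.of_forall fun ω => ⟨by positivity, ?_⟩
    have h : X ω ≤ n := by
      rw [hX]
      calc (Finset.univ.inf fun i => S i ω).card ≤ Fintype.card (Fin n) :=
            Finset.card_le_univ _
        _ = n := Fintype.card_fin n
    exact_mod_cast h
  have hMem : MemLp (fun ω => (X ω : ℝ)) 2 P :=
    memLp_of_bounded hbound hXmeasR.aestronglyMeasurable 2
  rw [variance_eq_sub hMem]
  have h2 : ∫ ω, ((fun ω => (X ω : ℝ)) ^ 2) ω ∂P = ∫ ω, (X ω : ℝ) ^ 2 ∂P := by
    simp [Pi.pow_apply]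
  rw [h2, hInt2, hInt1]
  ring

end

lemma aux_prod_le_single {ι : Type*} [DecidableEq ι] (s : Finset ι) (f : ι → ℝ)
    (h0 : ∀ j ∈ s, 0 ≤ f j) (h1 : ∀ j ∈ s, f j ≤ 1) {i : ι} (hi : i ∈ s) :
    ∏ j ∈ s, f j ≤ f i := by
  rw [← Finset.mul_prod_erase s f hi]
  have hle : ∏ j ∈ s.erase i, f j ≤ 1 :=
    Finset.prod_le_one (fun j hj => h0 j (Finset.mem_of_mem_erase hj))
      (fun j hj => h1 j (Finset.mem_of_mem_erase hj))
  exact mul_le_of_le_one_right (h0 i hi) hle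

lemma aux_prod_sub_le {ι : Type*} (f g : ι → ℝ) :
    ∀ s : Finset ι, (∀ i ∈ s, 0 ≤ g i) → (∀ i ∈ s, g i ≤ f i) → (∀ i ∈ s, f i ≤ 1) →
    ∏ i ∈ s, f i - ∏ i ∈ s, g i ≤ ∑ i ∈ s, (f i - g i) := by
  intro s
  induction s using Finset.cons_induction with
  | empty => intro _ _ _; simp
  | cons a s ha ih =>
    intro hg0 hgf hf1
    rw [Finset.prod_cons, Finset.prod_cons, Finset.sum_cons]
    have hg0' : ∀ i ∈ s, 0 ≤ g i := fun i hi => hg0 i (Finset.mem_cons_of_mem hi)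
    have hgf' : ∀ i ∈ s, g i ≤ f i := fun i hi => hgf i (Finset.mem_cons_of_mem hi)
    have hf1' : ∀ i ∈ s, f i ≤ 1 := fun i hi => hf1 i (Finset.mem_cons_of_mem hi)
    have hih := ih hg0' hgf' hf1'
    have hG0 : 0 ≤ ∏ i ∈ s, g i := Finset.prod_nonneg hg0'
    have hGF : ∏ i ∈ s, g i ≤ ∏ i ∈ s, f i := Finset.prod_le_prod hg0' hgf'
    have hG1 : ∏ i ∈ s, g i ≤ 1 :=
      Finset.prod_le_one hg0' (fun i hi => le_trans (hgf' i hi) (hf1' i hi))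
    have hga : 0 ≤ g a := hg0 a (Finset.mem_cons_self a s)
    have hgfa : g a ≤ f a := hgf a (Finset.mem_cons_self a s)
    have hfa1 : f a ≤ 1 := hf1 a (Finset.mem_cons_self a s)
    nlinarith [hih, hG0, hGF, hG1, hga, hgfa, hfa1]

set_option maxHeartbeats 1000000 in
lemma coupon_ratio_bounds {m n : ℕ} (hn : 2 ≤ n)
    (a : Fin m → ℕ) (ha2 : ∀ i, 2 ≤ a i) (han1 : ∀ i, a i ≤ n - 1)
    (i0 i1 : Fin m) (hne : i1 ≠ i0)
    (EX V : ℝ)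
    (hEX : EX = (n : ℝ) * ∏ i, ((a i : ℝ) / n))
    (hV : V = (n : ℝ) * ∏ i, ((a i : ℝ) / n)
        + ((n : ℝ) * ((n : ℝ) - 1))
            * ∏ i, ((a i : ℝ) * ((a i : ℝ) - 1) / ((n : ℝ) * ((n : ℝ) - 1)))
        - ((n : ℝ) * ∏ i, ((a i : ℝ) / n)) ^ 2) :
    V / ((a i0 : ℝ) - EX) ≤ (∏ i ∈ Finset.univ.erase i0, ((a i : ℝ) / n)) ∧
    (∏ i ∈ Finset.univ.erase i0, ((a i : ℝ) / n))
        - ((m : ℝ) - 1) * (a i0 : ℝ) / ((n : ℝ) - 1)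
      ≤ V / ((a i0 : ℝ) - EX) := by
  have hnR : (2 : ℝ) ≤ (n : ℝ) := by exact_mod_cast hn
  have hn0 : (0 : ℝ) < (n : ℝ) := by linarith
  have hn1 : (0 : ℝ) < (n : ℝ) - 1 := by linarith
  have hpa : ∀ i, (a i : ℝ) ≤ (n : ℝ) - 1 := by
    intro i
    have h := han1 i
    have : ((a i : ℕ) : ℝ) ≤ ((n - 1 : ℕ) : ℝ) := by exact_mod_cast h
    rwa [Nat.cast_sub (by omega), Nat.cast_one] at this
  have ha2R : ∀ i, (2 : ℝ) ≤ (a i : ℝ) := fun i => by exact_mod_cast ha2 i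
  set p : Fin m → ℝ := fun i => (a i : ℝ) / n with hp
  set q : Fin m → ℝ := fun i => (a i : ℝ) * ((a i : ℝ) - 1) / ((n : ℝ) * ((n : ℝ) - 1)) with hq
  have hp0 : ∀ i, 0 ≤ p i := fun i => by positivity
  have hp1 : ∀ i, p i ≤ ((n : ℝ) - 1) / n := fun i =>
    (div_le_div_iff_of_pos_right hn0).2 (hpa i)
  have hp1' : ∀ i, p i ≤ 1 := fun i => (hp1 i).trans (by rw [div_le_one hn0]; linarith)
  have hq0 : ∀ i, 0 ≤ q i := fun i => by
    have := ha2R i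
    have h1 : (0:ℝ) ≤ (a i : ℝ) * ((a i : ℝ) - 1) := by nlinarith
    exact div_nonneg h1 (by nlinarith)
  have hqp : ∀ i, q i ≤ (p i) ^ 2 := by
    intro i
    rw [hq, hp]
    rw [div_pow, div_le_div_iff₀ (by nlinarith) (by positivity)]
    have h1 := ha2R i; have h2 := hpa i
    have h3 : 0 ≤ (a i : ℝ) * (n : ℝ) * ((n : ℝ) - (a i : ℝ)) :=
      mul_nonneg (mul_nonneg (by linarith) hn0.le) (by linarith)
    nlinarith [h3]
  have hdiff : ∀ i, (p i) ^ 2 - q i = p i * (1 - p i) / ((n : ℝ) - 1) := by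
    intro i
    rw [hq, hp]
    field_simp
    ring
  set E : Finset (Fin m) := Finset.univ.erase i0 with hE
  set Pp : ℝ := ∏ i ∈ E, p i with hPp
  set Qq : ℝ := ∏ i ∈ E, q i with hQq
  have hPp0 : 0 ≤ Pp := Finset.prod_nonneg fun i _ => hp0 i
  have hQq0 : 0 ≤ Qq := Finset.prod_nonneg fun i _ => hq0 i
  have hQP : Qq ≤ Pp ^ 2 := by
    rw [hPp, ← Finset.prod_pow]
    exact Finset.prod_le_prod (fun i _ => hq0 i) (fun i _ => hqp i)
  have hPp1 : Pp ≤ 1 := Finset.prod_le_one (fun i _ => hp0 i) (fun i _ => hp1' i)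
  have hi1E : i1 ∈ E := Finset.mem_erase.2 ⟨hne, Finset.mem_univ _⟩
  have hPple : Pp ≤ p i1 :=
    aux_prod_le_single E p (fun j _ => hp0 j) (fun j _ => hp1' j) hi1E
  have h1P : 0 < 1 - Pp := by
    have h := (hp1 i1)
    have : ((n : ℝ) - 1) / n < 1 := by rw [div_lt_one hn0]; linarith
    linarith [hPple.trans h]
  set A : ℝ := (a i0 : ℝ) with hA
  have hA2R : (2 : ℝ) ≤ A := ha2R i0
  -- split products
  have hsplit1 : ∏ i, p i = p i0 * Pp :=
    (Finset.mul_prod_erase Finset.univ p (Finset.mem_univ i0)).symm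
  have hsplit2 : ∏ i, q i = q i0 * Qq :=
    (Finset.mul_prod_erase Finset.univ q (Finset.mem_univ i0)).symm
  have hEX' : EX = A * Pp := by
    rw [hEX, hsplit1, hp]
    field_simp
    rw [hA]; ring
  have hV' : V = A * Pp + A * (A - 1) * Qq - (A * Pp) ^ 2 := by
    rw [hV, hsplit1, hsplit2, hp, hq]
    have h1 : (n : ℝ) * ((a i0 : ℝ) / n * Pp) = A * Pp := by field_simp; rw [hA]; ring
    have h2 : ((n : ℝ) * ((n : ℝ) - 1))
        * ((a i0 : ℝ) * ((a i0 : ℝ) - 1) / ((n : ℝ) * ((n : ℝ) - 1)) * Qq)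
        = A * (A - 1) * Qq := by
      field_simp
      rw [hA]; ring
    rw [h1, h2]
  have hDeq : (a i0 : ℝ) - EX = A * (1 - Pp) := by rw [hEX']; ring
  have hDpos : 0 < A * (1 - Pp) := mul_pos (by linarith) h1P
  constructor
  · rw [hDeq, div_le_iff₀ hDpos, hV']
    have key : A * (A - 1) * Qq ≤ A * (A - 1) * Pp ^ 2 :=
      mul_le_mul_of_nonneg_left hQP (by nlinarith : (0:ℝ) ≤ A * (A - 1))
    nlinarith [key]
  · -- lower bound
    have hsum : Pp ^ 2 - Qq ≤ ((m : ℝ) - 1) * ((1 - Pp) / ((n : ℝ) - 1)) := by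
      have hstep := aux_prod_sub_le (fun i => (p i) ^ 2) q E
        (fun i _ => hq0 i) (fun i _ => hqp i)
        (fun i _ => by show p i ^ 2 ≤ 1; nlinarith [hp1' i, hp0 i])
      rw [Finset.prod_pow] at hstep
      have hterm : ∀ i ∈ E, (p i) ^ 2 - q i ≤ (1 - Pp) / ((n : ℝ) - 1) := by
        intro i hi
        rw [hdiff i]
        have hPpi : Pp ≤ p i :=
          aux_prod_le_single E p (fun j _ => hp0 j) (fun j _ => hp1' j) hi
        have : p i * (1 - p i) ≤ 1 - Pp := by nlinarith [hp0 i, hp1' i]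
        exact (div_le_div_iff_of_pos_right hn1).2 this
      have hcard : (E.card : ℝ) = (m : ℝ) - 1 := by
        rw [hE, Finset.card_erase_of_mem (Finset.mem_univ i0), Finset.card_univ,
          Fintype.card_fin]
        have hm1 : 1 ≤ m := Fin.pos i0
        rw [Nat.cast_sub hm1, Nat.cast_one]
      calc Pp ^ 2 - Qq ≤ ∑ i ∈ E, ((p i) ^ 2 - q i) := hstep
        _ ≤ ∑ i ∈ E, (1 - Pp) / ((n : ℝ) - 1) := Finset.sum_le_sum hterm
        _ = (E.card : ℝ) * ((1 - Pp) / ((n : ℝ) - 1)) := by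
            rw [Finset.sum_const, nsmul_eq_mul]
        _ = ((m : ℝ) - 1) * ((1 - Pp) / ((n : ℝ) - 1)) := by rw [hcard]
    rw [hDeq, le_div_iff₀ hDpos, hV']
    have hu0 : 0 ≤ (1 - Pp) / ((n : ℝ) - 1) := div_nonneg (by linarith) (by linarith)
    have hm1R : (0 : ℝ) ≤ (m : ℝ) - 1 := by
      have hm1 : 1 ≤ m := Fin.pos i0
      have : (1 : ℝ) ≤ (m : ℝ) := by exact_mod_cast hm1
      linarith
    have hkey := mul_le_mul_of_nonneg_left hsum (by nlinarith : (0:ℝ) ≤ A * (A - 1))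
    have hgap : 0 ≤ A * (((m : ℝ) - 1) * ((1 - Pp) / ((n : ℝ) - 1))) := by positivity
    simp only [div_eq_mul_inv] at hkey hgap ⊢
    linarith [hkey, hgap]

/-- **Lemma 3, case (ii).**
In the asymptotic coupon collector setting, if `α_1 = 0` and `α_2 = 1`, then
`Var(X_n) ~ a_1(n) - E(X_n)`, i.e. `Var(X_n) / (a_1(n) - E(X_n)) → 1`. -/
theorem coupon_variance_equiv_case_ii
    (m : ℕ) (hm : 2 ≤ m)
    (Ω : ℕ → Type) [instΩ : ∀ n, MeasurableSpace (Ω n)]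
    (P : ∀ n, Measure (Ω n)) (hP : ∀ n, IsProbabilityMeasure (P n))
    (a : ℕ → Fin m → ℕ)
    (S : ∀ n, Fin m → Ω n → Finset (Fin n))
    (hmeas : ∀ n (i : Fin m) (s : Finset (Fin n)), MeasurableSet {ω | S n i ω = s})
    (hindep : ∀ n, iIndepFun (m := fun _ => ⊤) (S n) (P n))
    (hunif : ∀ n, 2 ≤ n → ∀ (i : Fin m) (s : Finset (Fin n)),
      P n {ω | S n i ω = s} = if s.card = a n i then ((n.choose (a n i) : ℝ≥0∞))⁻¹ else 0)
    (X : ∀ n, Ω n → ℕ)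
    (hX : ∀ n ω, X n ω = (Finset.univ.inf fun i => S n i ω).card)
    (hA2 : ∀ i : Fin m, Tendsto (fun n => a n i) atTop atTop ∧
      Tendsto (fun n => n - a n i) atTop atTop)
    (hA3 : ∀ n, 2 ≤ n → Monotone (a n) ∧
      1 ≤ a n ⟨0, by omega⟩ ∧ a n ⟨m - 1, by omega⟩ ≤ n - 1)
    (α : Fin m → ℝ) (hα : ∀ i, α i ∈ Set.Icc (0 : ℝ) 1)
    (hA4 : ∀ i : Fin m, Tendsto (fun n => (a n i : ℝ) / n) atTop (𝓝 (α i)))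
    (hα1 : α ⟨0, by omega⟩ = 0) (hα2 : α ⟨1, by omega⟩ = 1)
    :
    Tendsto (fun n => variance (fun ω => (X n ω : ℝ)) (P n)
        / ((a n ⟨0, by omega⟩ : ℝ) - ∫ ω, (X n ω : ℝ) ∂(P n)))
      atTop (𝓝 1) := by
  have hm0 : (0:ℕ) < m := by omega
  have hm1 : (1:ℕ) < m := by omega
  let I0 : Fin m := ⟨0, hm0⟩
  let I1 : Fin m := ⟨1, hm1⟩
  have hα1' : α I0 = 0 := hα1
  have hα2' : α I1 = 1 := hα2
  have hne10 : I1 ≠ I0 := Fin.ne_of_val_ne (by norm_num)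
  have hA1n : Tendsto (fun n => (a n I0 : ℝ) / n) atTop (𝓝 0) := by
    have := hA4 I0
    rwa [hα1'] at this
  -- limit of the partial product
  have hPlim : Tendsto (fun n => ∏ i ∈ Finset.univ.erase I0, ((a n i : ℝ) / n))
      atTop (𝓝 1) := by
    have h1 : ∀ i ∈ Finset.univ.erase I0,
        Tendsto (fun n => (a n i : ℝ) / n) atTop (𝓝 (α i)) := fun i _ => hA4 i
    have h2 : ∀ i ∈ Finset.univ.erase I0, α i = 1 := by
      intro i hi
      have hvi : 1 ≤ (i : ℕ) := by
        have h := (Finset.mem_erase.1 hi).1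
        by_contra hc
        exact h (Fin.ext (by simp only [I0, Fin.val_mk]; omega))
      have hle : α I1 ≤ α i := by
        apply le_of_tendsto_of_tendsto (hA4 I1) (hA4 i)
        filter_upwards [eventually_ge_atTop 2] with n hn
        have hn0 : (0:ℝ) < (n:ℝ) := by
          have : (2:ℝ) ≤ (n:ℝ) := by exact_mod_cast hn
          linarith
        have hmono := (hA3 n hn).1
        have hle' : a n I1 ≤ a n i :=
          hmono (by rw [Fin.le_def]; simpa only [I1, Fin.val_mk] using hvi)
        exact (div_le_div_iff_of_pos_right hn0).2 (by exact_mod_cast hle')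
      have := (hα i).2
      linarith [hα2' ▸ hle]
    have h3 : ∀ i ∈ Finset.univ.erase I0,
        Tendsto (fun n => (a n i : ℝ) / n) atTop (𝓝 1) := by
      intro i hi
      have := h1 i hi
      rwa [h2 i hi] at this
    have h4 := tendsto_finset_prod (Finset.univ.erase I0) h3
    simpa using h4
  -- limit of the correction term
  have hclim : Tendsto (fun n => ((m:ℝ) - 1) * (a n I0 : ℝ) / ((n:ℝ) - 1))
      atTop (𝓝 0) := by
    have h0 : Tendsto (fun n => (a n I0 : ℝ) / ((n:ℝ) - 1)) atTop (𝓝 0) := by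
      have hub : Tendsto (fun n => 2 * ((a n I0 : ℝ) / n)) atTop (𝓝 0) := by
        have := hA1n.const_mul (2:ℝ)
        simpa using this
      apply tendsto_of_tendsto_of_tendsto_of_le_of_le' tendsto_const_nhds hub
      · filter_upwards [eventually_ge_atTop 2] with n hn
        have hnR : (2:ℝ) ≤ (n:ℝ) := by exact_mod_cast hn
        exact div_nonneg (Nat.cast_nonneg _) (by linarith)
      · filter_upwards [eventually_ge_atTop 2] with n hn
        have hnR : (2:ℝ) ≤ (n:ℝ) := by exact_mod_cast hn
        have hA0 : (0:ℝ) ≤ (a n I0 : ℝ) := Nat.cast_nonneg _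
        rw [show (2:ℝ) * ((a n I0 : ℝ)/n) = (2 * (a n I0 : ℝ))/n from by ring,
          div_le_div_iff₀ (by linarith) (by linarith)]
        nlinarith [mul_nonneg hA0 (by linarith : (0:ℝ) ≤ (n:ℝ) - 2)]
    have := h0.const_mul ((m:ℝ) - 1)
    simp only [mul_zero] at this
    simpa [mul_div_assoc] using this
  -- eventual bounds
  have hev : ∀ᶠ n in atTop, (2 ≤ n ∧ 2 ≤ a n I0) :=
    (eventually_ge_atTop 2).and ((hA2 I0).1.eventually_ge_atTop 2)
  have hbounds : ∀ᶠ n in atTop,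
      (variance (fun ω => (X n ω : ℝ)) (P n)
          / ((a n I0 : ℝ) - ∫ ω, (X n ω : ℝ) ∂(P n))
        ≤ ∏ i ∈ Finset.univ.erase I0, ((a n i : ℝ) / n)) ∧
      ((∏ i ∈ Finset.univ.erase I0, ((a n i : ℝ) / n))
          - ((m:ℝ) - 1) * (a n I0 : ℝ) / ((n:ℝ) - 1)
        ≤ variance (fun ω => (X n ω : ℝ)) (P n)
          / ((a n I0 : ℝ) - ∫ ω, (X n ω : ℝ) ∂(P n))) := by
    filter_upwards [hev] with n hn
    obtain ⟨hn2, ha02⟩ := hn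
    haveI := hP n
    have hmono := (hA3 n hn2).1
    have ha2' : ∀ i, 2 ≤ a n i := fun i =>
      le_trans ha02 (hmono (by rw [Fin.le_def]; exact Nat.zero_le _))
    have han1 : ∀ i, a n i ≤ n - 1 := by
      intro i
      refine le_trans (hmono (show i ≤ ⟨m - 1, by omega⟩ from ?_)) (hA3 n hn2).2.2
      rw [Fin.le_def]
      have := i.isLt
      simp only
      omega
    have hann : ∀ i, a n i ≤ n := fun i => le_trans (han1 i) (by omega)
    have hmom := coupon_moments hm0 hn2 (P n) (a n) (S n) (hmeas n) (hindep n)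
      (hunif n hn2) ha2' hann (X n) (hX n)
    exact coupon_ratio_bounds hn2 (a n) ha2' han1 I0 I1 hne10
      (∫ ω, (X n ω : ℝ) ∂(P n)) (variance (fun ω => (X n ω : ℝ)) (P n))
      hmom.1 hmom.2
  have hlow : Tendsto (fun n => (∏ i ∈ Finset.univ.erase I0, ((a n i : ℝ) / n))
      - ((m:ℝ) - 1) * (a n I0 : ℝ) / ((n:ℝ) - 1)) atTop (𝓝 1) := by
    have := hPlim.sub hclim
    simpa using this
  exact tendsto_of_tendsto_of_tendsto_of_le_of_le' hlow hPlim
    (hbounds.mono fun n h => h.2) (hbounds.mono fun n h => h.1)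
end

section
/- (Lemma 4, part (i)) In the coupon collector model, define for each coupon j ∈ {1,…,n} the Bernoulli variable Y_j = 1 if j ∈ S_1 ∩ ⋯ ∩ S_m and Y_j = 0 otherwise, so that X = Σ_{j=1}^n Y_j. Then Y_1,…,Y_n are negatively associated: for every pair of disjoint subsets A_1, A_2 ⊆ {1,…,n} and all coordinatewise nondecreasing real-valued functions f_1 (of the coordinates in A_1) and f_2 (of the coordinates in A_2), Cov(f_1((Y_j)_{j∈A_1}), f_2((Y_j)_{j∈A_2})) ≤ 0. -/
open MeasureTheory ProbabilityTheory Filter Finset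
open scoped ENNReal NNReal Topology

set_option maxHeartbeats 1000000

namespace CouponNA

variable {n : ℕ}

noncomputable def indf (s : Finset (Fin n)) : Fin n → ℝ := fun j => if j ∈ s then 1 else 0

noncomputable def wt (n k : ℕ) (s : Finset (Fin n)) : ℝ :=
  if s.card = k then ((n.choose k : ℝ))⁻¹ else 0

noncomputable def avg (C : Finset (Fin n)) (h : (Fin n → ℝ) → ℝ) (r : ℕ) : ℝ :=
  (∑ u ∈ C.powersetCard r, h (indf u)) / (C.card.choose r)

noncomputable def Yv {m : ℕ} (v : Fin m → Finset (Fin n)) : Fin n → ℝ :=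
  fun j => if ∀ i, j ∈ v i then 1 else 0

lemma wt_nonneg (n k : ℕ) (s : Finset (Fin n)) : 0 ≤ wt n k s := by
  unfold wt; split <;> positivity

/-- weighted Chebyshev / antivariation covariance inequality -/
lemma cheby {ι : Type*} (I : Finset ι) (p F G : ι → ℝ)
    (hp : ∀ i ∈ I, 0 ≤ p i) (hp1 : ∑ i ∈ I, p i = 1)
    (hFG : ∀ s ∈ I, ∀ t ∈ I, p s ≠ 0 → p t ≠ 0 → (F s - F t) * (G s - G t) ≤ 0) :
    ∑ i ∈ I, p i * F i * G i ≤ (∑ i ∈ I, p i * F i) * (∑ i ∈ I, p i * G i) := by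
  have key : ∑ s ∈ I, ∑ t ∈ I, p s * p t * ((F s - F t) * (G s - G t)) ≤ 0 := by
    apply Finset.sum_nonpos
    intro s hs
    apply Finset.sum_nonpos
    intro t ht
    rcases eq_or_ne (p s) 0 with h | h
    · simp [h]
    rcases eq_or_ne (p t) 0 with h' | h'
    · simp [h']
    have := hFG s hs t ht h h'
    have hps := hp s hs
    have hpt := hp t ht
    exact mul_nonpos_of_nonneg_of_nonpos (mul_nonneg hps hpt) this
  have expand : ∑ s ∈ I, ∑ t ∈ I, p s * p t * ((F s - F t) * (G s - G t))
      = ((∑ i ∈ I, p i * F i * G i) * (∑ i ∈ I, p i) + (∑ i ∈ I, p i) * (∑ i ∈ I, p i * F i * G i))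
        - ((∑ i ∈ I, p i * F i) * (∑ i ∈ I, p i * G i) + (∑ i ∈ I, p i * G i) * (∑ i ∈ I, p i * F i)) := by
    rw [Finset.sum_mul_sum, Finset.sum_mul_sum, Finset.sum_mul_sum, Finset.sum_mul_sum,
      ← Finset.sum_add_distrib, ← Finset.sum_add_distrib, ← Finset.sum_sub_distrib]
    apply Finset.sum_congr rfl
    intro s _
    rw [← Finset.sum_add_distrib, ← Finset.sum_add_distrib, ← Finset.sum_sub_distrib]
    apply Finset.sum_congr rfl
    intro t _
    ring
  rw [expand, hp1] at key
  linarith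

lemma indf_le_insert (x : Fin n) (u : Finset (Fin n)) : indf u ≤ indf (insert x u) := by
  intro j
  unfold indf
  by_cases h : j ∈ u
  · simp [h, Finset.mem_insert_of_mem h]
  · simp only [h, if_neg h, if_false]
    split <;> norm_num

lemma avg_step (C : Finset (Fin n)) (h : (Fin n → ℝ) → ℝ) (hmono : Monotone h)
    (t : ℕ) (ht : t + 1 ≤ C.card) : avg C h t ≤ avg C h (t + 1) := by
  have hCt : (0:ℝ) < (C.card.choose t : ℝ) := by
    exact_mod_cast Nat.choose_pos (le_trans (Nat.le_succ t) ht)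
  have hCt1 : (0:ℝ) < (C.card.choose (t+1) : ℝ) := by
    exact_mod_cast Nat.choose_pos ht
  have key : (∑ u ∈ C.powersetCard t, h (indf u)) * ((C.card - t : ℕ) : ℝ)
      ≤ (∑ v ∈ C.powersetCard (t+1), h (indf v)) * ((t+1 : ℕ) : ℝ) := by
    have lhs_eq : (∑ u ∈ C.powersetCard t, h (indf u)) * ((C.card - t : ℕ) : ℝ)
        = ∑ u ∈ C.powersetCard t, ∑ _x ∈ C \ u, h (indf u) := by
      rw [Finset.sum_mul]
      apply Finset.sum_congr rfl
      intro u hu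
      obtain ⟨hsub, hcard⟩ := Finset.mem_powersetCard.1 hu
      rw [Finset.sum_const, nsmul_eq_mul, Finset.card_sdiff_of_subset hsub, hcard, mul_comm]
    have rhs_eq : (∑ v ∈ C.powersetCard (t+1), h (indf v)) * ((t+1 : ℕ) : ℝ)
        = ∑ v ∈ C.powersetCard (t+1), ∑ _x ∈ v, h (indf v) := by
      rw [Finset.sum_mul]
      apply Finset.sum_congr rfl
      intro v hv
      obtain ⟨_, hcard⟩ := Finset.mem_powersetCard.1 hv
      rw [Finset.sum_const, nsmul_eq_mul, hcard, mul_comm]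
    rw [lhs_eq, rhs_eq]
    have step1 : ∑ u ∈ C.powersetCard t, ∑ x ∈ C \ u, h (indf u)
        ≤ ∑ u ∈ C.powersetCard t, ∑ x ∈ C \ u, h (indf (insert x u)) := by
      apply Finset.sum_le_sum
      intro u _
      apply Finset.sum_le_sum
      intro x _
      exact hmono (indf_le_insert x u)
    refine le_trans step1 (le_of_eq ?_)
    rw [Finset.sum_sigma', Finset.sum_sigma']
    refine Finset.sum_bij' (fun p _ => (⟨insert p.2 p.1, p.2⟩ : Σ _ : Finset (Fin n), Fin n))
      (fun q _ => (⟨q.1.erase q.2, q.2⟩ : Σ _ : Finset (Fin n), Fin n)) ?_ ?_ ?_ ?_ ?_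
    · rintro ⟨u, x⟩ hp
      rw [Finset.mem_sigma] at hp
      obtain ⟨hu, hx⟩ := hp
      obtain ⟨hsub, hcard⟩ := Finset.mem_powersetCard.1 hu
      rw [Finset.mem_sdiff] at hx
      rw [Finset.mem_sigma]
      constructor
      · rw [Finset.mem_powersetCard]
        exact ⟨Finset.insert_subset hx.1 hsub, by rw [Finset.card_insert_of_notMem hx.2, hcard]⟩
      · exact Finset.mem_insert_self _ _
    · rintro ⟨v, x⟩ hq
      rw [Finset.mem_sigma] at hq
      obtain ⟨hv, hx⟩ := hq
      obtain ⟨hsub, hcard⟩ := Finset.mem_powersetCard.1 hv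
      rw [Finset.mem_sigma]
      constructor
      · rw [Finset.mem_powersetCard]
        refine ⟨le_trans (Finset.erase_subset _ _) hsub, ?_⟩
        rw [Finset.card_erase_of_mem hx, hcard]
        omega
      · rw [Finset.mem_sdiff]
        exact ⟨hsub hx, Finset.notMem_erase _ _⟩
    · rintro ⟨u, x⟩ hp
      rw [Finset.mem_sigma] at hp
      have hx := hp.2
      rw [Finset.mem_sdiff] at hx
      simp [Finset.erase_insert_of_ne, Finset.erase_insert hx.2]
    · rintro ⟨v, x⟩ hq
      rw [Finset.mem_sigma] at hq
      simp [Finset.insert_erase hq.2]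
    · rintro ⟨u, x⟩ _
      rfl
  rw [avg, avg, div_le_div_iff₀ hCt hCt1]
  have hid : (C.card.choose (t+1) : ℝ) * ((t+1 : ℕ) : ℝ) = (C.card.choose t : ℝ) * ((C.card - t : ℕ) : ℝ) := by
    exact_mod_cast congrArg (Nat.cast : ℕ → ℝ) (Nat.choose_succ_right_eq C.card t)
  have hsub : (0:ℝ) < ((C.card - t : ℕ) : ℝ) := by
    have : 0 < C.card - t := by omega
    exact_mod_cast this
  have ht1 : (0:ℝ) < ((t+1 : ℕ) : ℝ) := by positivity
  have h2 := mul_le_mul_of_nonneg_right key (le_of_lt hCt1)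
  have e1 : (∑ u ∈ C.powersetCard t, h (indf u)) * ((C.card - t : ℕ) : ℝ) * (C.card.choose (t+1) : ℝ)
      = ((∑ u ∈ C.powersetCard t, h (indf u)) * (C.card.choose (t+1) : ℝ)) * ((C.card - t : ℕ) : ℝ) := by
    ring
  have e2 : (∑ v ∈ C.powersetCard (t+1), h (indf v)) * ((t+1 : ℕ) : ℝ) * (C.card.choose (t+1) : ℝ)
      = ((∑ v ∈ C.powersetCard (t+1), h (indf v)) * (C.card.choose t : ℝ)) * ((C.card - t : ℕ) : ℝ) := by
    linear_combination (∑ v ∈ C.powersetCard (t+1), h (indf v)) * hid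
  rw [e1, e2] at h2
  exact le_of_mul_le_mul_right h2 hsub

lemma avg_mono (C : Finset (Fin n)) (h : (Fin n → ℝ) → ℝ) (hmono : Monotone h)
    {r r' : ℕ} (hrr : r ≤ r') (hr' : r' ≤ C.card) : avg C h r ≤ avg C h r' := by
  have H : ∀ s, r ≤ s → s ≤ C.card → avg C h r ≤ avg C h s := by
    intro s hrs
    induction s, hrs using Nat.le_induction with
    | base => intro _; exact le_rfl
    | succ k hk ih =>
        intro hk1
        exact le_trans (ih (by omega)) (avg_step C h hmono k hk1)
  exact H r' hrr hr'

/-- decomposition of the sum over `k`-subsets according to the trace on `A` -/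
lemma decomp (A : Finset (Fin n)) (k : ℕ) (φ : Finset (Fin n) → ℝ) :
    ∑ s ∈ (univ : Finset (Fin n)).powersetCard k, φ s
      = ∑ t ∈ Finset.range (k+1), ∑ u ∈ A.powersetCard t,
          ∑ w ∈ Aᶜ.powersetCard (k - t), φ (u ∪ w) := by
  have hmaps : ∀ s ∈ (univ : Finset (Fin n)).powersetCard k,
      (s ∩ A).card ∈ Finset.range (k+1) := by
    intro s hs
    obtain ⟨-, hcard⟩ := Finset.mem_powersetCard.1 hs
    rw [Finset.mem_range]
    have := Finset.card_le_card (Finset.inter_subset_left : s ∩ A ⊆ s)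
    omega
  rw [← Finset.sum_fiberwise_of_maps_to hmaps φ]
  apply Finset.sum_congr rfl
  intro t ht
  rw [Finset.mem_range] at ht
  have hrhs : ∑ u ∈ A.powersetCard t, ∑ w ∈ Aᶜ.powersetCard (k - t), φ (u ∪ w)
      = ∑ q ∈ A.powersetCard t ×ˢ Aᶜ.powersetCard (k - t), φ (q.1 ∪ q.2) :=
    (Finset.sum_product (A.powersetCard t) (Aᶜ.powersetCard (k - t)) (fun q => φ (q.1 ∪ q.2))).symm
  rw [hrhs]
  refine Finset.sum_bij' (fun s _ => ((s ∩ A, s \ A) : Finset (Fin n) × Finset (Fin n)))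
    (fun q _ => q.1 ∪ q.2) ?_ ?_ ?_ ?_ ?_
  · intro s hs
    rw [Finset.mem_filter, Finset.mem_powersetCard] at hs
    obtain ⟨⟨-, hcard⟩, htr⟩ := hs
    rw [Finset.mem_product]
    constructor
    · rw [Finset.mem_powersetCard]
      exact ⟨Finset.inter_subset_right, htr⟩
    · rw [Finset.mem_powersetCard]
      constructor
      · intro x hx
        rw [Finset.mem_sdiff] at hx
        simpa [Finset.mem_compl] using hx.2
      · show (s \ A).card = k - t
        have := Finset.card_sdiff_add_card_inter s A
        omega
  · intro q hq
    rw [Finset.mem_product, Finset.mem_powersetCard, Finset.mem_powersetCard] at hq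
    obtain ⟨⟨huA, hucard⟩, hwAc, hwcard⟩ := hq
    have hdisj : Disjoint q.1 q.2 := by
      rw [Finset.disjoint_left]
      intro x hxu hxw
      exact (Finset.mem_compl.1 (hwAc hxw)) (huA hxu)
    have hq1A : (q.1 ∪ q.2) ∩ A = q.1 := by
      ext x
      simp only [Finset.mem_inter, Finset.mem_union]
      constructor
      · rintro ⟨hx | hx, hxA⟩
        · exact hx
        · exact absurd hxA (Finset.mem_compl.1 (hwAc hx))
      · intro hx
        exact ⟨Or.inl hx, huA hx⟩
    rw [Finset.mem_filter, Finset.mem_powersetCard]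
    refine ⟨⟨Finset.subset_univ _, ?_⟩, ?_⟩
    · rw [Finset.card_union_of_disjoint hdisj, hucard, hwcard]
      omega
    · rw [hq1A, hucard]
  · intro s hs
    simp only
    rw [Finset.union_comm, Finset.sdiff_union_inter]
  · intro q hq
    rw [Finset.mem_product, Finset.mem_powersetCard, Finset.mem_powersetCard] at hq
    obtain ⟨⟨huA, hucard⟩, hwAc, hwcard⟩ := hq
    have hq1A : (q.1 ∪ q.2) ∩ A = q.1 := by
      ext x
      simp only [Finset.mem_inter, Finset.mem_union]
      constructor
      · rintro ⟨hx | hx, hxA⟩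
        · exact hx
        · exact absurd hxA (Finset.mem_compl.1 (hwAc hx))
      · intro hx
        exact ⟨Or.inl hx, huA hx⟩
    have hq2A : (q.1 ∪ q.2) \ A = q.2 := by
      ext x
      simp only [Finset.mem_sdiff, Finset.mem_union]
      constructor
      · rintro ⟨hx | hx, hxA⟩
        · exact absurd (huA hx) hxA
        · exact hx
      · intro hx
        exact ⟨Or.inr hx, Finset.mem_compl.1 (hwAc hx)⟩
    ext : 1 <;> simp [hq1A, hq2A]
  · intro s hs
    simp only
    rw [Finset.union_comm, Finset.sdiff_union_inter]

lemma sum_wt_mul (k : ℕ) (φ : Finset (Fin n) → ℝ) :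
    ∑ s : Finset (Fin n), wt n k s * φ s
      = ((n.choose k : ℝ))⁻¹ * ∑ s ∈ (univ : Finset (Fin n)).powersetCard k, φ s := by
  have hpc : (univ : Finset (Finset (Fin n))).filter (fun s => s.card = k)
      = (univ : Finset (Fin n)).powersetCard k := by
    rw [Finset.powersetCard_eq_filter, Finset.powerset_univ]
  rw [← hpc, Finset.mul_sum, Finset.sum_filter]
  apply Finset.sum_congr rfl
  intro s _
  unfold wt
  split <;> simp

lemma base {k : ℕ} (hk : k ≤ n) (A B : Finset (Fin n)) (hAB : Disjoint A B)
    (f g : (Fin n → ℝ) → ℝ) (hf : Monotone f) (hg : Monotone g)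
    (hfA : ∀ y y' : Fin n → ℝ, (∀ j ∈ A, y j = y' j) → f y = f y')
    (hgB : ∀ y y' : Fin n → ℝ, (∀ j ∈ B, y j = y' j) → g y = g y') :
    ∑ s : Finset (Fin n), wt n k s * (f (indf s) * g (indf s))
      ≤ (∑ s : Finset (Fin n), wt n k s * f (indf s))
        * (∑ s : Finset (Fin n), wt n k s * g (indf s)) := by
  have hN : (0:ℝ) < (n.choose k : ℝ) := by exact_mod_cast Nat.choose_pos hk
  have hf_uw : ∀ u w2 : Finset (Fin n), u ⊆ A → w2 ⊆ Aᶜ →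
      f (indf (u ∪ w2)) = f (indf u) := by
    intro u w2 hu hw
    apply hfA
    intro j hj
    have hjw : j ∉ w2 := fun hmem => (Finset.mem_compl.1 (hw hmem)) hj
    unfold indf
    by_cases h : j ∈ u
    · simp [h, Finset.mem_union]
    · have h2 : j ∉ u ∪ w2 := by rw [Finset.mem_union]; tauto
      simp [h, h2]
  have hg_uw : ∀ u w2 : Finset (Fin n), u ⊆ A → w2 ⊆ Aᶜ →
      g (indf (u ∪ w2)) = g (indf w2) := by
    intro u w2 hu hw
    apply hgB
    intro j hj
    have hjA : j ∉ A := Finset.disjoint_right.1 hAB hj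
    have hju : j ∉ u := fun hmem => hjA (hu hmem)
    unfold indf
    by_cases h : j ∈ w2
    · simp [h, Finset.mem_union]
    · have h2 : j ∉ u ∪ w2 := by rw [Finset.mem_union]; tauto
      simp [h, h2]
  set p : ℕ → ℝ :=
    fun t => (A.card.choose t : ℝ) * ((Aᶜ : Finset (Fin n)).card.choose (k - t) : ℝ)
      / (n.choose k : ℝ) with hp_def
  have main : ∀ α β : Finset (Fin n) → ℝ,
      ((n.choose k : ℝ))⁻¹ * ∑ t ∈ Finset.range (k+1), ∑ u ∈ A.powersetCard t,
          ∑ w ∈ Aᶜ.powersetCard (k - t), α u * β w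
        = ∑ t ∈ Finset.range (k+1), p t
            * ((∑ u ∈ A.powersetCard t, α u) / (A.card.choose t : ℝ))
            * ((∑ w ∈ Aᶜ.powersetCard (k - t), β w)
                / ((Aᶜ : Finset (Fin n)).card.choose (k - t) : ℝ)) := by
    intro α β
    rw [Finset.mul_sum]
    apply Finset.sum_congr rfl
    intro t _
    rw [← Finset.sum_mul_sum]
    rcases eq_or_ne ((A.card.choose t : ℝ)) 0 with hc | hc
    · have hempty : A.powersetCard t = ∅ := by
        rw [Finset.powersetCard_eq_empty]
        have : A.card.choose t = 0 := by exact_mod_cast hc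
        rwa [Nat.choose_eq_zero_iff] at this
      rw [hempty]
      simp [hp_def, hc]
    rcases eq_or_ne (((Aᶜ : Finset (Fin n)).card.choose (k - t) : ℝ)) 0 with hc' | hc'
    · have hempty : (Aᶜ : Finset (Fin n)).powersetCard (k - t) = ∅ := by
        rw [Finset.powersetCard_eq_empty]
        have : (Aᶜ : Finset (Fin n)).card.choose (k - t) = 0 := by exact_mod_cast hc'
        rwa [Nat.choose_eq_zero_iff] at this
      rw [hempty]
      simp [hp_def, hc']
    · simp only [hp_def]
      field_simp
  -- the three expectation identities
  have Efg : ∑ s : Finset (Fin n), wt n k s * (f (indf s) * g (indf s))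
      = ∑ t ∈ Finset.range (k+1), p t * avg A f t * avg Aᶜ g (k - t) := by
    rw [sum_wt_mul, decomp A k]
    have hcongr : ∀ t ∈ Finset.range (k+1), ∑ u ∈ A.powersetCard t,
        ∑ w ∈ Aᶜ.powersetCard (k - t), f (indf (u ∪ w)) * g (indf (u ∪ w))
          = ∑ u ∈ A.powersetCard t, ∑ w ∈ Aᶜ.powersetCard (k - t),
              f (indf u) * g (indf w) := by
      intro t _
      apply Finset.sum_congr rfl
      intro u hu
      apply Finset.sum_congr rfl
      intro w hw
      rw [hf_uw u w (Finset.mem_powersetCard.1 hu).1 (Finset.mem_powersetCard.1 hw).1,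
        hg_uw u w (Finset.mem_powersetCard.1 hu).1 (Finset.mem_powersetCard.1 hw).1]
    rw [Finset.sum_congr rfl hcongr, main (fun u => f (indf u)) (fun w => g (indf w))]
    simp only [avg]
  have Ef : ∑ s : Finset (Fin n), wt n k s * f (indf s)
      = ∑ t ∈ Finset.range (k+1), p t * avg A f t := by
    rw [sum_wt_mul, decomp A k]
    have hcongr : ∀ t ∈ Finset.range (k+1), ∑ u ∈ A.powersetCard t,
        ∑ w ∈ Aᶜ.powersetCard (k - t), f (indf (u ∪ w))
          = ∑ u ∈ A.powersetCard t, ∑ w ∈ Aᶜ.powersetCard (k - t),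
              f (indf u) * (fun _ => (1:ℝ)) w := by
      intro t _
      apply Finset.sum_congr rfl
      intro u hu
      apply Finset.sum_congr rfl
      intro w hw
      rw [hf_uw u w (Finset.mem_powersetCard.1 hu).1 (Finset.mem_powersetCard.1 hw).1]
      simp
    rw [Finset.sum_congr rfl hcongr, main (fun u => f (indf u)) (fun _ => (1:ℝ))]
    apply Finset.sum_congr rfl
    intro t _
    rcases eq_or_ne (((Aᶜ : Finset (Fin n)).card.choose (k - t) : ℝ)) 0 with hc' | hc'
    · simp [hp_def, hc', avg]
    · rw [Finset.sum_const, Finset.card_powersetCard, nsmul_eq_mul, mul_one,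
        div_self hc', mul_one]
      simp only [avg]
  have Eg : ∑ s : Finset (Fin n), wt n k s * g (indf s)
      = ∑ t ∈ Finset.range (k+1), p t * avg Aᶜ g (k - t) := by
    rw [sum_wt_mul, decomp A k]
    have hcongr : ∀ t ∈ Finset.range (k+1), ∑ u ∈ A.powersetCard t,
        ∑ w ∈ Aᶜ.powersetCard (k - t), g (indf (u ∪ w))
          = ∑ u ∈ A.powersetCard t, ∑ w ∈ Aᶜ.powersetCard (k - t),
              (fun _ => (1:ℝ)) u * g (indf w) := by
      intro t _
      apply Finset.sum_congr rfl
      intro u hu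
      apply Finset.sum_congr rfl
      intro w hw
      rw [hg_uw u w (Finset.mem_powersetCard.1 hu).1 (Finset.mem_powersetCard.1 hw).1]
      simp
    rw [Finset.sum_congr rfl hcongr, main (fun _ => (1:ℝ)) (fun w => g (indf w))]
    apply Finset.sum_congr rfl
    intro t _
    rcases eq_or_ne ((A.card.choose t : ℝ)) 0 with hc | hc
    · simp [hp_def, hc, avg]
    · rw [Finset.sum_const, Finset.card_powersetCard, nsmul_eq_mul, mul_one,
        div_self hc, mul_one]
      simp only [avg]
  have hp1 : ∑ t ∈ Finset.range (k+1), p t = 1 := by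
    have h1 := main (fun _ => (1:ℝ)) (fun _ => (1:ℝ))
    simp only [mul_one] at h1
    rw [← decomp A k (fun _ => (1:ℝ))] at h1
    rw [Finset.sum_const, Finset.card_powersetCard, Finset.card_univ, Fintype.card_fin,
      nsmul_eq_mul, mul_one, inv_mul_cancel₀ hN.ne'] at h1
    rw [h1]
    apply Finset.sum_congr rfl
    intro t _
    rcases eq_or_ne ((A.card.choose t : ℝ)) 0 with hc | hc
    · simp [hp_def, hc]
    rcases eq_or_ne (((Aᶜ : Finset (Fin n)).card.choose (k - t) : ℝ)) 0 with hc' | hc'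
    · simp [hp_def, hc']
    · rw [Finset.sum_const, Finset.card_powersetCard, nsmul_eq_mul,
        Finset.sum_const, Finset.card_powersetCard, nsmul_eq_mul]
      field_simp
  -- apply the Chebyshev inequality
  rw [Efg, Ef, Eg]
  have hchoose_ne : ∀ t, p t ≠ 0 →
      A.card.choose t ≠ 0 ∧ (Aᶜ : Finset (Fin n)).card.choose (k - t) ≠ 0 := by
    intro t hpt
    constructor
    · intro h0
      apply hpt
      rw [hp_def]
      simp [h0]
    · intro h0
      apply hpt
      rw [hp_def]
      simp [h0]
  have hEfg' : ∑ t ∈ Finset.range (k+1), p t * avg A f t * avg Aᶜ g (k - t)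
      ≤ (∑ t ∈ Finset.range (k+1), p t * avg A f t)
        * (∑ t ∈ Finset.range (k+1), p t * avg Aᶜ g (k - t)) := by
    apply cheby (Finset.range (k+1)) p (fun t => avg A f t) (fun t => avg Aᶜ g (k - t))
      ?_ hp1 ?_
    · intro t _
      rw [hp_def]
      positivity
    · intro s hs t ht hps hpt
      have hs1 := hchoose_ne s hps
      have ht1 := hchoose_ne t hpt
      have hsA : s ≤ A.card := by
        by_contra hlt
        push_neg at hlt
        exact hs1.1 (Nat.choose_eq_zero_of_lt hlt)
      have htA : t ≤ A.card := by
        by_contra hlt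
        push_neg at hlt
        exact ht1.1 (Nat.choose_eq_zero_of_lt hlt)
      have hsC : k - s ≤ (Aᶜ : Finset (Fin n)).card := by
        by_contra hlt
        push_neg at hlt
        exact hs1.2 (Nat.choose_eq_zero_of_lt hlt)
      have htC : k - t ≤ (Aᶜ : Finset (Fin n)).card := by
        by_contra hlt
        push_neg at hlt
        exact ht1.2 (Nat.choose_eq_zero_of_lt hlt)
      rcases le_total s t with hst | hst
      · have hF : avg A f s ≤ avg A f t := avg_mono A f hf hst htA
        have hG : avg Aᶜ g (k - t) ≤ avg Aᶜ g (k - s) :=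
          avg_mono Aᶜ g hg (Nat.sub_le_sub_left hst k) hsC
        nlinarith
      · have hF : avg A f t ≤ avg A f s := avg_mono A f hf hst hsA
        have hG : avg Aᶜ g (k - s) ≤ avg Aᶜ g (k - t) :=
          avg_mono Aᶜ g hg (Nat.sub_le_sub_left hst k) htC
        nlinarith
  exact hEfg'

lemma Yv_cons {m : ℕ} (s : Finset (Fin n)) (v' : Fin m → Finset (Fin n)) :
    Yv (Fin.cons s v') = fun j => min (indf s j) (Yv v' j) := by
  funext j
  by_cases h1 : j ∈ s <;> by_cases h2 : ∀ i : Fin m, j ∈ v' i <;>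
    simp [Yv, indf, Fin.forall_fin_succ, Fin.cons_zero, Fin.cons_succ, h1, h2]

lemma core (m : ℕ) (a : Fin m → ℕ) (ha : ∀ i, a i ≤ n)
    (A B : Finset (Fin n)) (hAB : Disjoint A B)
    (f g : (Fin n → ℝ) → ℝ) (hf : Monotone f) (hg : Monotone g)
    (hfA : ∀ y y' : Fin n → ℝ, (∀ j ∈ A, y j = y' j) → f y = f y')
    (hgB : ∀ y y' : Fin n → ℝ, (∀ j ∈ B, y j = y' j) → g y = g y') :
    ∑ v : Fin m → Finset (Fin n), (∏ i, wt n (a i) (v i)) * (f (Yv v) * g (Yv v))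
      ≤ (∑ v : Fin m → Finset (Fin n), (∏ i, wt n (a i) (v i)) * f (Yv v))
        * (∑ v : Fin m → Finset (Fin n), (∏ i, wt n (a i) (v i)) * g (Yv v)) := by
  induction m generalizing f g with
  | zero =>
      rw [Fintype.sum_unique, Fintype.sum_unique, Fintype.sum_unique]
      simp
  | succ m ih =>
      have hsplit : ∀ φ : (Fin (m+1) → Finset (Fin n)) → ℝ,
          ∑ v : Fin (m+1) → Finset (Fin n), φ v
            = ∑ s : Finset (Fin n), ∑ v' : Fin m → Finset (Fin n), φ (Fin.cons s v') := by
        intro φ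
        rw [← Fintype.sum_equiv (Fin.consEquiv (fun _ => Finset (Fin n)))
          (fun q => φ (Fin.cons q.1 q.2)) φ (fun q => rfl)]
        exact Fintype.sum_prod_type _
      have hprod : ∀ (s : Finset (Fin n)) (v' : Fin m → Finset (Fin n)),
          ∏ i : Fin (m+1), wt n (a i) ((Fin.cons s v' : Fin (m+1) → Finset (Fin n)) i)
            = wt n (a 0) s * ∏ i : Fin m, wt n (a i.succ) (v' i) := by
        intro s v'
        rw [Fin.prod_univ_succ]
        simp [Fin.cons_zero, Fin.cons_succ]
      set W' : (Fin m → Finset (Fin n)) → ℝ := fun v' => ∏ i : Fin m, wt n (a i.succ) (v' i)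
        with hW'
      have hW'_nonneg : ∀ v', 0 ≤ W' v' := by
        intro v'
        apply Finset.prod_nonneg
        intro i _
        exact wt_nonneg n _ _
      set Φf : (Fin n → ℝ) → ℝ :=
        fun z => ∑ v' : Fin m → Finset (Fin n), W' v' * f (fun j => min (z j) (Yv v' j))
        with hΦf
      set Φg : (Fin n → ℝ) → ℝ :=
        fun z => ∑ v' : Fin m → Finset (Fin n), W' v' * g (fun j => min (z j) (Yv v' j))
        with hΦg
      have hΦf_mono : Monotone Φf := by
        intro z z' hz
        apply Finset.sum_le_sum
        intro v' _
        exact mul_le_mul_of_nonneg_left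
          (hf (fun j => min_le_min (hz j) le_rfl)) (hW'_nonneg v')
      have hΦg_mono : Monotone Φg := by
        intro z z' hz
        apply Finset.sum_le_sum
        intro v' _
        exact mul_le_mul_of_nonneg_left
          (hg (fun j => min_le_min (hz j) le_rfl)) (hW'_nonneg v')
      have hΦf_loc : ∀ y y' : Fin n → ℝ, (∀ j ∈ A, y j = y' j) → Φf y = Φf y' := by
        intro y y' hyy
        apply Finset.sum_congr rfl
        intro v' _
        congr 1
        apply hfA
        intro j hj
        rw [hyy j hj]
      have hΦg_loc : ∀ y y' : Fin n → ℝ, (∀ j ∈ B, y j = y' j) → Φg y = Φg y' := by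
        intro y y' hyy
        apply Finset.sum_congr rfl
        intro v' _
        congr 1
        apply hgB
        intro j hj
        rw [hyy j hj]
      -- identities expressing the full sums via (s, v')
      have hEf : ∑ v : Fin (m+1) → Finset (Fin n), (∏ i, wt n (a i) (v i)) * f (Yv v)
          = ∑ s : Finset (Fin n), wt n (a 0) s * Φf (indf s) := by
        rw [hsplit]
        apply Finset.sum_congr rfl
        intro s _
        rw [hΦf, Finset.mul_sum]
        apply Finset.sum_congr rfl
        intro v' _
        rw [hprod, Yv_cons]
        ring
      have hEg : ∑ v : Fin (m+1) → Finset (Fin n), (∏ i, wt n (a i) (v i)) * g (Yv v)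
          = ∑ s : Finset (Fin n), wt n (a 0) s * Φg (indf s) := by
        rw [hsplit]
        apply Finset.sum_congr rfl
        intro s _
        rw [hΦg, Finset.mul_sum]
        apply Finset.sum_congr rfl
        intro v' _
        rw [hprod, Yv_cons]
        ring
      have step1 : ∑ v : Fin (m+1) → Finset (Fin n), (∏ i, wt n (a i) (v i)) * (f (Yv v) * g (Yv v))
          ≤ ∑ s : Finset (Fin n), wt n (a 0) s * (Φf (indf s) * Φg (indf s)) := by
        rw [hsplit]
        apply Finset.sum_le_sum
        intro s _
        have inner : ∑ v' : Fin m → Finset (Fin n),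
            (∏ i, wt n (a i) ((Fin.cons s v' : Fin (m+1) → Finset (Fin n)) i))
              * (f (Yv (Fin.cons s v')) * g (Yv (Fin.cons s v')))
            = wt n (a 0) s * ∑ v' : Fin m → Finset (Fin n),
                W' v' * ((fun y => f (fun j => min (indf s j) (y j))) (Yv v')
                  * (fun y => g (fun j => min (indf s j) (y j))) (Yv v')) := by
          rw [Finset.mul_sum]
          apply Finset.sum_congr rfl
          intro v' _
          rw [hprod, Yv_cons]
          ring
        rw [inner]
        apply mul_le_mul_of_nonneg_left _ (wt_nonneg n (a 0) s)
        have happ := ih (fun i => a i.succ) (fun i => ha i.succ)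
          (fun y => f (fun j => min (indf s j) (y j)))
          (fun y => g (fun j => min (indf s j) (y j)))
          (fun y y' hy => hf (fun j => min_le_min le_rfl (hy j)))
          (fun y y' hy => hg (fun j => min_le_min le_rfl (hy j)))
          (fun y y' hyy => hfA _ _ (fun j hj => by rw [hyy j hj]))
          (fun y y' hyy => hgB _ _ (fun j hj => by rw [hyy j hj]))
        exact happ
      have step2 : ∑ s : Finset (Fin n), wt n (a 0) s * (Φf (indf s) * Φg (indf s))
          ≤ (∑ s : Finset (Fin n), wt n (a 0) s * Φf (indf s))
            * (∑ s : Finset (Fin n), wt n (a 0) s * Φg (indf s)) :=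
        base (ha 0) A B hAB Φf Φg hΦf_mono hΦg_mono hΦf_loc hΦg_loc
      rw [hEf, hEg]
      exact le_trans step1 step2

end CouponNA

open CouponNA

/-- **Lemma 4, part (i) (negative association).**
In the coupon collector model, let `Y_j` be the indicator that coupon `j` is collected by
every collector, so that `X = ∑ j, Y_j`. Then `Y_1, …, Y_n` are negatively associated: for
any disjoint index sets `A₁, A₂` and any coordinatewise nondecreasing functions `f₁, f₂`
depending only on the coordinates in `A₁` resp. `A₂`,
`Cov(f₁((Y_j)_{j ∈ A₁}), f₂((Y_j)_{j ∈ A₂})) ≤ 0`. -/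
theorem coupon_negatively_associated_indicators
    {Ω : Type*} [MeasurableSpace Ω] (P : Measure Ω) [IsProbabilityMeasure P]
    (n m : ℕ) (hn : 1 ≤ n) (hm : 1 ≤ m)
    (a : Fin m → ℕ) (ha : ∀ i, 1 ≤ a i ∧ a i ≤ n)
    (S : Fin m → Ω → Finset (Fin n))
    (hmeas : ∀ i (s : Finset (Fin n)), MeasurableSet {ω | S i ω = s})
    (hindep : iIndepFun (m := fun _ => ⊤) S P)
    (hunif : ∀ i (s : Finset (Fin n)),
      P {ω | S i ω = s} = if s.card = a i then ((n.choose (a i) : ℝ≥0∞))⁻¹ else 0)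
    (X : Ω → ℕ) (hX : ∀ ω, X ω = (Finset.univ.inf fun i => S i ω).card)
    (Y : Fin n → Ω → ℝ)
    (hY : ∀ j ω, Y j ω = if ∀ i, j ∈ S i ω then 1 else 0) :
    (∀ ω, (X ω : ℝ) = ∑ j, Y j ω) ∧
    ∀ A₁ A₂ : Finset (Fin n), Disjoint A₁ A₂ →
      ∀ f₁ f₂ : (Fin n → ℝ) → ℝ, Monotone f₁ → Monotone f₂ →
        (∀ g h : Fin n → ℝ, (∀ j ∈ A₁, g j = h j) → f₁ g = f₁ h) →
        (∀ g h : Fin n → ℝ, (∀ j ∈ A₂, g j = h j) → f₂ g = f₂ h) →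
        (∫ ω, (f₁ fun j => Y j ω) * (f₂ fun j => Y j ω) ∂P)
          - (∫ ω, (f₁ fun j => Y j ω) ∂P) * (∫ ω, (f₂ fun j => Y j ω) ∂P) ≤ 0 := by
  constructor
  · intro ω
    rw [hX]
    have hmem : ∀ j, (j ∈ Finset.univ.inf fun i => S i ω) ↔ ∀ i, j ∈ S i ω := by
      intro j
      rw [Finset.mem_inf]
      exact ⟨fun h i => h i (Finset.mem_univ i), fun h i _ => h i⟩
    have : (∑ j, Y j ω) = ∑ j : Fin n, if j ∈ (Finset.univ.inf fun i => S i ω) then (1:ℝ) else 0 := by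
      apply Finset.sum_congr rfl
      intro j _
      rw [hY]
      by_cases h : ∀ i, j ∈ S i ω
      · rw [if_pos h, if_pos ((hmem j).2 h)]
      · rw [if_neg h, if_neg (fun hc => h ((hmem j).1 hc))]
    rw [this]
    simp [Finset.sum_boole, Finset.filter_mem_eq_inter]
  · intro A₁ A₂ hA f₁ f₂ hf₁ hf₂ hloc₁ hloc₂
    -- events
    set E : (Fin m → Finset (Fin n)) → Set Ω := fun v => ⋂ i, {ω | S i ω = v i} with hE
    have hEmeas : ∀ v, MeasurableSet (E v) := fun v =>
      MeasurableSet.iInter (fun i => hmeas i (v i))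
    have hPE : ∀ v : Fin m → Finset (Fin n), P (E v) = ∏ i, P {ω | S i ω = v i} := by
      intro v
      exact hindep.meas_iInter (fun i => ⟨{v i}, trivial, rfl⟩)
    have hwt : ∀ (v : Fin m → Finset (Fin n)) (i : Fin m), (P {ω | S i ω = v i}).toReal = wt n (a i) (v i) := by
      intro v i
      rw [hunif]
      unfold wt
      split
      · rw [ENNReal.toReal_inv]
        norm_num
      · simp
    have hint : ∀ φ : (Fin m → Finset (Fin n)) → ℝ,
        ∫ ω, φ (fun i => S i ω) ∂P
          = ∑ v : Fin m → Finset (Fin n), (∏ i, wt n (a i) (v i)) * φ v := by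
      intro φ
      have hfun : (fun ω => φ (fun i => S i ω))
          = fun ω => ∑ v : Fin m → Finset (Fin n),
              Set.indicator (E v) (fun _ => φ v) ω := by
        funext ω
        rw [Finset.sum_eq_single (fun i => S i ω)]
        · rw [Set.indicator_of_mem]
          exact Set.mem_iInter.2 (fun i => rfl)
        · intro v _ hv
          rw [Set.indicator_of_notMem]
          intro hc
          apply hv
          funext i
          exact (Set.mem_iInter.1 hc i).symm
        · intro habs
          exact absurd (Finset.mem_univ _) habs
      rw [hfun, MeasureTheory.integral_finset_sum]
      · apply Finset.sum_congr rfl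
        intro v _
        rw [MeasureTheory.integral_indicator_const _ (hEmeas v), measureReal_def, hPE v,
          ENNReal.toReal_prod, smul_eq_mul]
        congr 1
        exact Finset.prod_congr rfl (fun i _ => hwt v i)
      · intro v _
        exact (integrable_const (φ v)).indicator (hEmeas v)
    have hYeq : ∀ ω, (fun j => Y j ω) = Yv (fun i => S i ω) := by
      intro ω
      funext j
      rw [hY]
      rfl
    have h1 : ∫ ω, (f₁ fun j => Y j ω) * (f₂ fun j => Y j ω) ∂P
        = ∑ v : Fin m → Finset (Fin n), (∏ i, wt n (a i) (v i)) * (f₁ (Yv v) * f₂ (Yv v)) := by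
      rw [← hint (fun v => f₁ (Yv v) * f₂ (Yv v))]
      apply integral_congr_ae
      filter_upwards with ω
      rw [hYeq ω]
    have h2 : ∫ ω, (f₁ fun j => Y j ω) ∂P
        = ∑ v : Fin m → Finset (Fin n), (∏ i, wt n (a i) (v i)) * f₁ (Yv v) := by
      rw [← hint (fun v => f₁ (Yv v))]
      apply integral_congr_ae
      filter_upwards with ω
      rw [hYeq ω]
    have h3 : ∫ ω, (f₂ fun j => Y j ω) ∂P
        = ∑ v : Fin m → Finset (Fin n), (∏ i, wt n (a i) (v i)) * f₂ (Yv v) := by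
      rw [← hint (fun v => f₂ (Yv v))]
      apply integral_congr_ae
      filter_upwards with ω
      rw [hYeq ω]
    rw [h1, h2, h3, sub_nonpos]
    exact core m a (fun i => (ha i).2) A₁ A₂ hA f₁ f₂ hf₁ hf₂ hloc₁ hloc₂
end
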